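/- Let d and n be natural numbers with d ≥ 1, let W_0, …, W_n be points of ℝ^d, let ω_0, …, ω_n be positive real numbers, and let c ∈ (0,1). Define the rational Bézier curve R_n(t) := (Σ_{i=0}^{n} ω_i B^n_i(t) W_i) / (Σ_{i=0}^{n} ω_i B^n_i(t)) for t ∈ [0,1], the subdivided weights ν_k := Σ_{i=0}^{k} ω_i B^k_i(c), and the subdivided control points V_k := (1/ν_k) Σ_{i=0}^{k} ω_i B^k_i(c) W_i for 0 ≤ k ≤ n. Then for every t ∈ [0,1], (Σ_{k=0}^{n} ν_k B^n_k(t) V_k) / (Σ_{k=0}^{n} ν_k B^n_k(t)) = R_n(c·t); that is, the rational Bézier curve with weights ν_k and control points V_k parametrizes the left segment R_n([0,c]). -/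

import Mathlib

/-- The `i`-th Bernstein basis polynomial of degree `n`:
`B^n_i(t) = C(n,i) * t^i * (1-t)^(n-i)`. -/
noncomputable def bern (n i : ℕ) (t : ℝ) : ℝ :=
  (n.choose i : ℝ) * t ^ i * (1 - t) ^ (n - i)

/-!
Subdividing at `c` is a reparametrisation `t ↦ c t`, and Bernstein polynomials transform under it by
`∑ₖ Bⁿₖ(t) Bᵏᵢ(c) = Bⁿᵢ(c t)`, which is the binomial theorem applied to `1 - c t = t (1 - c) + (1 - t)`.
Hence the numerator and the denominator of the subdivided curve, once the factors `νₖ` cancel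
against the `νₖ⁻¹` in `Vₖ`, are exactly those of `Rₙ(c t)`.
-/

open Finset

lemma bern_eq_zero_of_lt {n i : ℕ} (h : n < i) (t : ℝ) : bern n i t = 0 := by
  simp [bern, Nat.choose_eq_zero_of_lt h]

lemma bern_pos {k i : ℕ} (h : i ≤ k) {c : ℝ} (hc : c ∈ Set.Ioo (0 : ℝ) 1) : 0 < bern k i c := by
  have hchoose : (0 : ℝ) < k.choose i := by exact_mod_cast Nat.choose_pos h
  have hc' : 0 < 1 - c := sub_pos.mpr hc.2
  have hc0 := hc.1
  unfold bern
  positivity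

lemma sum_bern_mul_bern {n i : ℕ} (hi : i ≤ n) (c t : ℝ) :
    ∑ k ∈ range (n + 1), bern n k t * bern k i c = bern n i (c * t) := by
  have hlow : ∑ k ∈ range i, bern n k t * bern k i c = 0 :=
    sum_eq_zero fun k hk => by rw [bern_eq_zero_of_lt (mem_range.mp hk), mul_zero]
  rw [← sum_range_add_sum_Ico _ (by omega : i ≤ n + 1), hlow, zero_add,
    sum_Ico_eq_sum_range, show n + 1 - i = n - i + 1 by omega]
  unfold bern
  rw [show 1 - c * t = t * (1 - c) + (1 - t) by ring, add_pow, mul_sum]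
  refine sum_congr rfl fun j hj => ?_
  have hj : j ≤ n - i := Nat.lt_succ_iff.mp (mem_range.mp hj)
  have hchoose : (n.choose (i + j) : ℝ) * (i + j).choose i = n.choose i * (n - i).choose j := by
    have h := Nat.choose_mul (n := n) (Nat.le_add_right i j)
    rw [Nat.add_sub_cancel_left] at h
    exact_mod_cast h
  rw [Nat.add_sub_cancel_left, show n - (i + j) = n - i - j by omega, pow_add, mul_pow, mul_pow]
  linear_combination (t ^ i * t ^ j * (1 - t) ^ (n - i - j) * c ^ i * (1 - c) ^ j) * hchoose

lemma sum_range_bern_smul_of_le {M : Type*} [AddCommMonoid M] [Module ℝ M] {k n : ℕ} (hk : k ≤ n)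
    (c : ℝ) (a : ℕ → M) :
    ∑ i ∈ range (k + 1), bern k i c • a i = ∑ i ∈ range (n + 1), bern k i c • a i :=
  sum_subset (range_subset_range.mpr (by omega)) fun i _ hi => by
    rw [bern_eq_zero_of_lt (by simpa using hi), zero_smul]

lemma sum_bern_smul_sum_bern_smul {M : Type*} [AddCommMonoid M] [Module ℝ M] (n : ℕ) (c t : ℝ)
    (a : ℕ → M) :
    ∑ k ∈ range (n + 1), bern n k t • ∑ i ∈ range (k + 1), bern k i c • a i =
      ∑ i ∈ range (n + 1), bern n i (c * t) • a i := by
  calc ∑ k ∈ range (n + 1), bern n k t • ∑ i ∈ range (k + 1), bern k i c • a i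
      = ∑ k ∈ range (n + 1), ∑ i ∈ range (n + 1), (bern n k t * bern k i c) • a i :=
        sum_congr rfl fun k hk => by
          rw [sum_range_bern_smul_of_le (Nat.lt_succ_iff.mp (mem_range.mp hk)), smul_sum]
          simp only [smul_smul]
    _ = ∑ i ∈ range (n + 1), (∑ k ∈ range (n + 1), bern n k t * bern k i c) • a i := by
        rw [sum_comm]
        simp only [sum_smul]
    _ = ∑ i ∈ range (n + 1), bern n i (c * t) • a i :=
        sum_congr rfl fun i hi => by
          rw [sum_bern_mul_bern (Nat.lt_succ_iff.mp (mem_range.mp hi))]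

theorem rational_bezier_left_segment_general
    (d n : ℕ) (W : ℕ → (Fin d → ℝ))
    (ω : ℕ → ℝ) (hω : ∀ i ≤ n, 0 < ω i)
    (c : ℝ) (hc : c ∈ Set.Ioo (0 : ℝ) 1)
    (R : ℝ → (Fin d → ℝ))
    (hR : ∀ t ∈ Set.Icc (0 : ℝ) 1,
      R t = (∑ i ∈ Finset.range (n + 1), ω i * bern n i t)⁻¹ •
        ∑ i ∈ Finset.range (n + 1), (ω i * bern n i t) • W i)
    (ν : ℕ → ℝ)
    (hν : ∀ k ≤ n, ν k = ∑ i ∈ Finset.range (k + 1), ω i * bern k i c)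
    (V : ℕ → (Fin d → ℝ))
    (hV : ∀ k ≤ n, V k = (ν k)⁻¹ •
      ∑ i ∈ Finset.range (k + 1), (ω i * bern k i c) • W i) :
    ∀ t ∈ Set.Icc (0 : ℝ) 1,
      (∑ k ∈ Finset.range (n + 1), ν k * bern n k t)⁻¹ •
        ∑ k ∈ Finset.range (n + 1), (ν k * bern n k t) • V k = R (c * t) := by
  intro t ⟨ht0, ht1⟩
  have hct : c * t ∈ Set.Icc (0 : ℝ) 1 :=
    ⟨mul_nonneg hc.1.le ht0, mul_le_one₀ hc.2.le ht0 ht1⟩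
  have hν_pos : ∀ k ≤ n, 0 < ν k := fun k hk => by
    rw [hν k hk]
    exact sum_pos (fun i hi => mul_pos (hω i (by simp at hi; omega))
      (bern_pos (by simpa [Nat.lt_succ_iff] using hi) hc)) nonempty_range_add_one
  have hden : ∀ k ∈ range (n + 1),
      ν k * bern n k t = bern n k t • ∑ i ∈ range (k + 1), bern k i c • ω i := fun k hk => by
    simp only [hν k (Nat.lt_succ_iff.mp (mem_range.mp hk)), smul_eq_mul, mul_comm]
  have hnum : ∀ k ∈ range (n + 1),
      (ν k * bern n k t) • V k = bern n k t • ∑ i ∈ range (k + 1), bern k i c • ω i • W i :=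
    fun k hk => by
      have hk : k ≤ n := Nat.lt_succ_iff.mp (mem_range.mp hk)
      rw [hV k hk, smul_smul, mul_right_comm, mul_inv_cancel₀ (hν_pos k hk).ne', one_mul]
      simp only [smul_smul, mul_comm]
  rw [hR _ hct, sum_congr rfl hden, sum_congr rfl hnum, sum_bern_smul_sum_bern_smul,
    sum_bern_smul_sum_bern_smul]
  simp only [smul_eq_mul, smul_smul, mul_comm]

theorem rational_bezier_left_segment
    (d n : ℕ) (hd : 1 ≤ d) (W : ℕ → (Fin d → ℝ))
    (ω : ℕ → ℝ) (hω : ∀ i ≤ n, 0 < ω i)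
    (c : ℝ) (hc : c ∈ Set.Ioo (0 : ℝ) 1)
    (R : ℝ → (Fin d → ℝ))
    (hR : ∀ t ∈ Set.Icc (0 : ℝ) 1,
      R t = (∑ i ∈ Finset.range (n + 1), ω i * bern n i t)⁻¹ •
        ∑ i ∈ Finset.range (n + 1), (ω i * bern n i t) • W i)
    (ν : ℕ → ℝ)
    (hν : ∀ k ≤ n, ν k = ∑ i ∈ Finset.range (k + 1), ω i * bern k i c)
    (V : ℕ → (Fin d → ℝ))
    (hV : ∀ k ≤ n, V k = (ν k)⁻¹ •
      ∑ i ∈ Finset.range (k + 1), (ω i * bern k i c) • W i) :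
    ∀ t ∈ Set.Icc (0 : ℝ) 1,
      (∑ k ∈ Finset.range (n + 1), ν k * bern n k t)⁻¹ •
        ∑ k ∈ Finset.range (n + 1), (ν k * bern n k t) • V k = R (c * t) :=
  rational_bezier_left_segment_general d n W ω hω c hc R hR ν hν V hV
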